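/- arXiv:2002.02386 — 2 statements merged into one kernel-verified Lean document; each statement's English description precedes it below -/
import Mathlib

section
/- For every U ∈ Sp(2), i.e. every 2×2 quaternionic matrix with U*U = 1, the real-linear map of ℝ⁸ ≅ ℍ² given by left matrix multiplication by U preserves Ψ₀ under pullback: Ψ₀(U v₁, U v₂, U v₃, U v₄) = Ψ₀(v₁, v₂, v₃, v₄) for all v₁, v₂, v₃, v₄ ∈ ℝ⁸. -/
/- STATEMENT 6: Every U ∈ Sp(2) (2×2 quaternionic matrix with U*U = 1), acting on
ℝ⁸ ≅ ℍ² by left matrix multiplication, preserves Ψ₀ under pullback. -/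

open Quaternion

noncomputable section

/-- ℝ⁸ as column vectors ℍ². -/
abbrev V8 := Fin 2 → ℍ[ℝ]

/-- Coordinates of a quaternion in the basis `e₀ = 1, e₁ = −i, e₂ = −j, e₃ = −k`. -/
def qc : Fin 4 → ℍ[ℝ] → ℝ :=
  ![fun q => q.re, fun q => -q.imI, fun q => -q.imJ, fun q => -q.imK]

/-- x-coordinates on ℝ⁸ = ℍ². -/
def cx (i : Fin 4) : V8 → ℝ := fun p => qc i (p 0)
/-- y-coordinates on ℝ⁸ = ℍ². -/
def cy (i : Fin 4) : V8 → ℝ := fun p => qc i (p 1)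

/-- Wedge of two 1-forms. -/
def w2 (f g : V8 → ℝ) : V8 → V8 → ℝ := fun u v => f u * g v - f v * g u

/-- Wedge of two alternating 2-forms. -/
def w22 (a b : V8 → V8 → ℝ) : V8 → V8 → V8 → V8 → ℝ := fun v1 v2 v3 v4 =>
  a v1 v2 * b v3 v4 - a v1 v3 * b v2 v4 + a v1 v4 * b v2 v3 +
  a v2 v3 * b v1 v4 - a v2 v4 * b v1 v3 + a v3 v4 * b v1 v2

def ox1 : V8 → V8 → ℝ := fun u v => w2 (cx 0) (cx 1) u v + w2 (cx 2) (cx 3) u v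
def ox2 : V8 → V8 → ℝ := fun u v => w2 (cx 0) (cx 2) u v - w2 (cx 1) (cx 3) u v
def ox3 : V8 → V8 → ℝ := fun u v => w2 (cx 0) (cx 3) u v + w2 (cx 1) (cx 2) u v
def oy1 : V8 → V8 → ℝ := fun u v => w2 (cy 0) (cy 1) u v + w2 (cy 2) (cy 3) u v
def oy2 : V8 → V8 → ℝ := fun u v => w2 (cy 0) (cy 2) u v - w2 (cy 1) (cy 3) u v
def oy3 : V8 → V8 → ℝ := fun u v => w2 (cy 0) (cy 3) u v + w2 (cy 1) (cy 2) u v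

/-- Ψ₀ = dx⁰¹²³ + dy⁰¹²³ + ω₁ˣ∧ω₁ʸ + ω₂ˣ∧ω₂ʸ − ω₃ˣ∧ω₃ʸ. -/
def Psi0 : V8 → V8 → V8 → V8 → ℝ := fun v1 v2 v3 v4 =>
  w22 (w2 (cx 0) (cx 1)) (w2 (cx 2) (cx 3)) v1 v2 v3 v4 +
  w22 (w2 (cy 0) (cy 1)) (w2 (cy 2) (cy 3)) v1 v2 v3 v4 +
  w22 ox1 oy1 v1 v2 v3 v4 + w22 ox2 oy2 v1 v2 v3 v4 - w22 ox3 oy3 v1 v2 v3 v4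


/-- Quaternion-valued sesquilinear pairing on ℍ², invariant under Sp(2). -/
def sQ (u v : V8) : ℍ[ℝ] := dotProduct (star u) v

/-- Real bilinear form on ℍ used to reconstruct Ψ₀. -/
def Bq (p q : ℍ[ℝ]) : ℝ := p.imI * q.imI + p.imJ * q.imJ - p.imK * q.imK

lemma sQ_eq (u v : V8) : sQ u v = star (u 0) * v 0 + star (u 1) * v 1 := by
  simp [sQ, dotProduct, Fin.sum_univ_two]

lemma sQ_invariant (U : Matrix (Fin 2) (Fin 2) ℍ[ℝ]) (hU : star U * U = 1)
    (u v : V8) : sQ (U.mulVec u) (U.mulVec v) = sQ u v := by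
  unfold sQ
  rw [Matrix.star_mulVec, Matrix.dotProduct_mulVec, Matrix.vecMul_vecMul]
  rw [show Matrix.vecMul (star u) (Matrix.conjTranspose U * U) = star u by
    rw [← Matrix.star_eq_conjTranspose, hU, Matrix.vecMul_one]]

lemma Psi0_eq_sQ (v1 v2 v3 v4 : V8) :
    Psi0 v1 v2 v3 v4 =
      Bq (sQ v1 v2) (sQ v3 v4) - Bq (sQ v1 v3) (sQ v2 v4) +
        Bq (sQ v1 v4) (sQ v2 v3) := by
  simp only [Psi0, w22, w2, ox1, ox2, ox3, oy1, oy2, oy3, cx, cy, qc,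
    Matrix.cons_val_zero, Matrix.cons_val_one, Matrix.head_cons,
    Matrix.cons_val_two, Matrix.tail_cons, Matrix.cons_val_three,
    Bq, sQ_eq, Quaternion.imI_add, Quaternion.imJ_add, Quaternion.imK_add,
    Quaternion.imI_mul, Quaternion.imJ_mul, Quaternion.imK_mul,
    Quaternion.re_mul, Quaternion.re_star, Quaternion.imI_star,
    Quaternion.imJ_star, Quaternion.imK_star]
  ring

theorem Sp2_preserves_Psi0 (U : Matrix (Fin 2) (Fin 2) ℍ[ℝ])
    (hU : star U * U = 1) :
    ∀ v1 v2 v3 v4 : V8,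
      Psi0 (U.mulVec v1) (U.mulVec v2) (U.mulVec v3) (U.mulVec v4) =
        Psi0 v1 v2 v3 v4 := by
  intro v1 v2 v3 v4
  rw [Psi0_eq_sQ, Psi0_eq_sQ, sQ_invariant U hU, sQ_invariant U hU,
    sQ_invariant U hU, sQ_invariant U hU, sQ_invariant U hU, sQ_invariant U hU]
end
end

section
/- For every M ∈ W, regard M as a real-linear endomorphism of ℝ⁸ ≅ ℍ² via left matrix multiplication, and let I₁, I₂ be the endomorphisms of ℝ⁸ acting on each ℍ factor by right quaternion multiplication by e₁ = −i and e₂ = −j respectively. Then the compositions M∘I₁ and M∘I₂ are skew-symmetric endomorphisms of ℝ⁸ which lie in the infinitesimal stabilizer 𝔞 of Ψ₀ (i.e. in Lie(Spin(7))). -/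
/- STATEMENT 16: For M ∈ W (a traceless self-adjoint 2×2 quaternionic matrix,
acting on ℝ⁸ ≅ ℍ² by left matrix multiplication) and I₁, I₂ right multiplication
by e₁ = −i, e₂ = −j on each ℍ factor, the compositions M∘I₁ and M∘I₂ are
skew-symmetric endomorphisms of ℝ⁸ lying in the infinitesimal stabilizer 𝔞 of Ψ₀
(i.e. in Lie(Spin(7))). -/

open Quaternion

noncomputable section

/-- e₁ = −i. -/
def e1 : ℍ[ℝ] := ⟨0, -1, 0, 0⟩
/-- e₂ = −j. -/
def e2 : ℍ[ℝ] := ⟨0, 0, -1, 0⟩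

/-- The Euclidean inner product on ℝ⁸ ≅ ℍ². -/
def dot (u v : V8) : ℝ := ∑ i : Fin 2, (u i * star (v i)).re

/-- Skew-symmetry with respect to the Euclidean inner product. -/
def IsSkew (T : V8 → V8) : Prop := ∀ u v : V8, dot (T u) v = - dot u (T v)

/-- Membership in the infinitesimal stabilizer 𝔞 of Ψ₀ (the derivation property). -/
def StabilizesPsi0 (T : V8 → V8) : Prop :=
  ∀ v1 v2 v3 v4 : V8,
    Psi0 (T v1) v2 v3 v4 + Psi0 v1 (T v2) v3 v4 +
      Psi0 v1 v2 (T v3) v4 + Psi0 v1 v2 v3 (T v4) = 0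

/-!
A matrix `M = [[a, z̄], [z, -a]] ∈ W` is Hermitian, and right multiplication `R_e` by a purely
imaginary quaternion `e` commutes with `M` and is skew, hence `M ∘ R_e` is skew. That `M ∘ R_e`
annihilates `Ψ₀` is a polynomial identity in `a`, `z`, `e` and the coordinates of the four
arguments, valid for every `e` in the span of `e₁` and `e₂`.
-/

open Matrix

lemma Quaternion.re_mul_comm {R : Type*} [CommRing R] (p q : Quaternion R) :
    (p * q).re = (q * p).re := by
  simp only [Quaternion.re_mul]; ring

lemma Quaternion.re_sum {R ι : Type*} [CommRing R] (s : Finset ι) (f : ι → Quaternion R) :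
    (∑ i ∈ s, f i).re = ∑ i ∈ s, (f i).re :=
  map_sum (QuaternionAlgebra.reₗ (-1 : R) 0 (-1)) f s

lemma dot_mulVec_of_isHermitian {M : Matrix (Fin 2) (Fin 2) ℍ[ℝ]} (hM : M.IsHermitian)
    (u v : V8) : dot (M *ᵥ u) v = dot u (M *ᵥ v) := by
  have hstar : ∀ i j, star (M j i) = M i j := fun i j => by
    simpa using congrFun (congrFun hM i) j
  simp only [dot, mulVec, dotProduct, Finset.sum_mul, Finset.mul_sum, star_sum, star_mul, hstar,
    Quaternion.re_sum]
  rw [Finset.sum_comm]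
  refine Finset.sum_congr rfl fun j _ => Finset.sum_congr rfl fun i _ => ?_
  rw [mul_assoc, Quaternion.re_mul_comm, ← mul_assoc]

lemma dot_mul_right_of_re_eq_zero {e : ℍ[ℝ]} (he : e.re = 0) (u v : V8) :
    dot (fun j => u j * e) v = - dot u (fun j => v j * e) := by
  simp only [dot, star_mul, Quaternion.star_eq_neg.mpr he, ← Finset.sum_neg_distrib,
    ← Quaternion.re_neg, mul_neg, neg_mul, neg_neg, mul_assoc]

lemma mulVec_mul_right (M : Matrix (Fin 2) (Fin 2) ℍ[ℝ]) (v : V8) (e : ℍ[ℝ]) :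
    (M *ᵥ fun j => v j * e) = fun i => (M *ᵥ v) i * e := by
  ext1 i
  simp only [mulVec, dotProduct, Finset.sum_mul, mul_assoc]

lemma isSkew_mulVec_mul_right {M : Matrix (Fin 2) (Fin 2) ℍ[ℝ]} (hM : M.IsHermitian)
    {e : ℍ[ℝ]} (he : e.re = 0) : IsSkew fun v => M *ᵥ fun j => v j * e := by
  intro u v
  dsimp only
  rw [mulVec_mul_right, dot_mul_right_of_re_eq_zero he, dot_mulVec_of_isHermitian hM,
    mulVec_mul_right]

lemma qc_zero (q : ℍ[ℝ]) : qc 0 q = q.re := rfl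
lemma qc_one (q : ℍ[ℝ]) : qc 1 q = -q.imI := rfl
lemma qc_two (q : ℍ[ℝ]) : qc 2 q = -q.imJ := rfl
lemma qc_three (q : ℍ[ℝ]) : qc 3 q = -q.imK := rfl

def wMatrix (a : ℝ) (z : ℍ[ℝ]) : Matrix (Fin 2) (Fin 2) ℍ[ℝ] :=
  !![(a : ℍ[ℝ]), star z; z, -(a : ℍ[ℝ])]

lemma exists_eq_wMatrix {M : Matrix (Fin 2) (Fin 2) ℍ[ℝ]}
    (hW : (M 0 0).im = 0 ∧ M 1 1 = -M 0 0 ∧ M 0 1 = star (M 1 0)) :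
    ∃ a z, M = wMatrix a z := by
  obtain ⟨him, h11, h01⟩ := hW
  refine ⟨(M 0 0).re, M 1 0, ?_⟩
  have h00 : M 0 0 = (M 0 0).re := by
    simpa [him] using (Quaternion.re_add_im (M 0 0)).symm
  refine Matrix.ext fun i j => ?_
  fin_cases i <;> fin_cases j <;> simp [wMatrix, ← h00, h11, h01]

lemma isHermitian_wMatrix (a : ℝ) (z : ℍ[ℝ]) : (wMatrix a z).IsHermitian := by
  refine Matrix.ext fun i j => ?_
  fin_cases i <;> fin_cases j <;> simp [wMatrix, Quaternion.star_coe]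

set_option maxHeartbeats 1000000 in
lemma stabilizesPsi0_wMatrix_mulVec_mul_right (a : ℝ) (z : ℍ[ℝ]) {e : ℍ[ℝ]}
    (hre : e.re = 0) (himK : e.imK = 0) :
    StabilizesPsi0 fun v => wMatrix a z *ᵥ fun j => v j * e := by
  intro v1 v2 v3 v4
  simp only [Psi0, w22, w2, ox1, ox2, ox3, oy1, oy2, oy3, cx, cy, qc_zero, qc_one, qc_two,
    qc_three, wMatrix, mulVec, dotProduct, Fin.sum_univ_two, of_apply, cons_val', cons_val_zero,
    cons_val_one, empty_val', cons_val_fin_one]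
  simp only [Quaternion.re_mul, Quaternion.imI_mul, Quaternion.imJ_mul, Quaternion.imK_mul,
    Quaternion.re_add, Quaternion.imI_add, Quaternion.imJ_add, Quaternion.imK_add,
    Quaternion.re_neg, Quaternion.imI_neg, Quaternion.imJ_neg, Quaternion.imK_neg,
    Quaternion.re_star, Quaternion.imI_star, Quaternion.imJ_star, Quaternion.imK_star,
    Quaternion.re_coe, Quaternion.imI_coe, Quaternion.imJ_coe, Quaternion.imK_coe, hre, himK]
  ring

theorem WI1_WI2_in_spin7 (M : Matrix (Fin 2) (Fin 2) ℍ[ℝ])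
    (hW : (M 0 0).im = 0 ∧ M 1 1 = -M 0 0 ∧ M 0 1 = star (M 1 0)) :
    (IsSkew fun v => M.mulVec fun j => v j * e1) ∧
    (StabilizesPsi0 fun v => M.mulVec fun j => v j * e1) ∧
    (IsSkew fun v => M.mulVec fun j => v j * e2) ∧
    (StabilizesPsi0 fun v => M.mulVec fun j => v j * e2) := by
  obtain ⟨a, z, rfl⟩ := exists_eq_wMatrix hW
  have hM := isHermitian_wMatrix a z
  exact ⟨isSkew_mulVec_mul_right hM rfl, stabilizesPsi0_wMatrix_mulVec_mul_right a z rfl rfl,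
    isSkew_mulVec_mul_right hM rfl, stabilizesPsi0_wMatrix_mulVec_mul_right a z rfl rfl⟩
end
end
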